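/- Let (β_n) be the copula-based predictive distributions built from a strictly positive density f_0, copula densities (c_n), and weights r_n ∈ (0,1], via f_{n+1}(x|y,z) = (1-r_n) f_n(x|y) + r_n f_n(x|y) c_n(F_n(x|y), F_n(z|y)). If ∑_n r_n < ∞, then the random densities f_n(·|X(n)) form an a.s. Cauchy sequence in L¹(ℝ) and hence the limit random probability measure β satisfies β(dx) = f(x)dx for a random density f; equivalently, β_n → β in total variation almost surely. In particular E(D_n) ≤ 2 r_n, where D_n = ∫|f_{n+1}(x|X(n+1)) - f_n(x|X(n))| dx. -/
import Mathlib


open MeasureTheory ProbabilityTheory Filter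

/-- Total variation distance between two measures: sup over measurable sets. -/
noncomputable def tvDist {α : Type*} [MeasurableSpace α] (μ ν : Measure α) : ℝ :=
  ⨆ A : {s : Set α // MeasurableSet s}, |(μ A.1).toReal - (ν A.1).toReal|

lemma aux_cdf {g : ℝ → ℝ} (hmeas : Measurable g) (hpos : ∀ x, 0 < g x)
    (hint : Integrable g) (hone : ∫ x, g x = 1) :
    Monotone (fun x => ∫ t in Set.Iic x, g t) ∧
    (∀ x, (∫ t in Set.Iic x, g t) ∈ Set.Ioo (0:ℝ) 1) ∧
    (∀ k : ℝ → ℝ, Measurable k → (∀ u, 0 ≤ k u) → (∫ u in Set.Ioc (0:ℝ) 1, k u = 1) →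
      Integrable (fun x => g x * k (∫ t in Set.Iic x, g t)) ∧
      ∫ x, g x * k (∫ t in Set.Iic x, g t) = 1) := by
  set G : ℝ → ℝ := fun x => ∫ t in Set.Iic x, g t with hGdef
  have hgnn : ∀ x, (0:ℝ) ≤ g x := fun x => (hpos x).le
  have hsupp : Function.support g = Set.univ := by
    ext x; simp [Function.mem_support, (hpos x).ne']
  have hposset : ∀ s : Set ℝ, MeasurableSet s → volume s ≠ 0 → 0 < ∫ t in s, g t := by
    intro s hs hs0
    rw [setIntegral_pos_iff_support_of_nonneg_ae (ae_of_all _ hgnn) hint.integrableOn]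
    rw [hsupp, Set.univ_inter]
    exact hs0.bot_lt
  have hGadd : ∀ x x', x ≤ x' → G x' = G x + ∫ t in Set.Ioc x x', g t := by
    intro x x' h
    have h1 : Set.Iic x' = Set.Iic x ∪ Set.Ioc x x' := (Set.Iic_union_Ioc_eq_Iic h).symm
    rw [hGdef]
    simp only
    rw [h1, setIntegral_union (Set.Iic_disjoint_Ioc le_rfl) measurableSet_Ioc
      hint.integrableOn hint.integrableOn]
  have hGsm : StrictMono G := by
    intro x x' h
    have h2 : (0:ℝ) < ∫ t in Set.Ioc x x', g t := by
      apply hposset _ measurableSet_Ioc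
      rw [Real.volume_Ioc]
      simp [ENNReal.ofReal_eq_zero]
      linarith
    have := hGadd x x' h.le
    linarith
  have hGpos : ∀ x, 0 < G x := fun x =>
    hposset _ measurableSet_Iic (by rw [Real.volume_Iic]; exact ENNReal.top_ne_zero)
  have hGlt1 : ∀ x, G x < 1 := by
    intro x
    have hsplit : (1:ℝ) = G x + ∫ t in Set.Ioi x, g t := by
      rw [← hone, ← setIntegral_univ (f := g), ← Set.Iic_union_Ioi (a := x),
        setIntegral_union (Set.Iic_disjoint_Ioi le_rfl) measurableSet_Ioi
          hint.integrableOn hint.integrableOn]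
    have h2 : (0:ℝ) < ∫ t in Set.Ioi x, g t := by
      apply hposset _ measurableSet_Ioi
      rw [Real.volume_Ioi]; exact ENNReal.top_ne_zero
    linarith
  have hGcont : Continuous G := by
    have h0 : ∀ x, G x = (∫ t in Set.Iic (0:ℝ), g t) + ∫ t in (0:ℝ)..x, g t := by
      intro x
      rw [← intervalIntegral.integral_Iic_sub_Iic hint.integrableOn hint.integrableOn]
      ring
    rw [show G = fun x => (∫ t in Set.Iic (0:ℝ), g t) + ∫ t in (0:ℝ)..x, g t from funext h0]
    exact continuous_const.add (hint.continuous_primitive 0)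
  have hGmeas : Measurable G := hGcont.measurable
  -- the pushforward measure
  set μ : Measure ℝ := volume.withDensity (fun x => ENNReal.ofReal (g x)) with hμ
  have hμIic : ∀ x, μ (Set.Iic x) = ENNReal.ofReal (G x) := by
    intro x
    rw [hμ, withDensity_apply _ measurableSet_Iic,
      ← ofReal_integral_eq_lintegral_ofReal hint.integrableOn
        (ae_restrict_of_ae (ae_of_all _ hgnn))]
  have hμuniv : μ Set.univ = 1 := by
    rw [hμ, withDensity_apply _ MeasurableSet.univ, Measure.restrict_univ,
      ← ofReal_integral_eq_lintegral_ofReal hint (ae_of_all _ hgnn), hone, ENNReal.ofReal_one]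
  haveI : IsProbabilityMeasure μ := ⟨hμuniv⟩
  have htop : Tendsto (fun n : ℕ => G (n:ℝ)) atTop (nhds 1) := by
    have hU : ⋃ n : ℕ, Set.Iic ((n:ℝ)) = Set.univ := by
      ext x
      simp only [Set.mem_iUnion, Set.mem_Iic, Set.mem_univ, iff_true]
      exact ⟨⌈x⌉₊, Nat.le_ceil x⟩
    have h := tendsto_setIntegral_of_monotone (f := g) (μ := volume)
      (fun n : ℕ => measurableSet_Iic)
      (fun i j h => Set.Iic_subset_Iic.mpr (Nat.cast_le.mpr h))
      (by rw [hU]; exact hint.integrableOn)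
    rw [hU, setIntegral_univ, hone] at h
    simpa only [hGdef] using h
  have hbot : Tendsto (fun n : ℕ => G (-(n:ℝ))) atTop (nhds 0) := by
    have hI : ⋂ n : ℕ, Set.Iic (-(n:ℝ)) = ∅ := by
      ext x
      simp only [Set.mem_iInter, Set.mem_Iic, Set.mem_empty_iff_false, iff_false]
      push_neg
      obtain ⟨n, hn⟩ := exists_nat_gt (-x)
      exact ⟨n, by linarith⟩
    have h := tendsto_setIntegral_of_antitone (f := g) (μ := volume)
      (fun n : ℕ => measurableSet_Iic)
      (fun i j h => Set.Iic_subset_Iic.mpr (neg_le_neg (Nat.cast_le.mpr h)))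
      ⟨0, hint.integrableOn⟩
    rw [hI] at h
    simp only [Measure.restrict_empty, integral_zero_measure] at h
    simpa only [hGdef] using h
  haveI : IsProbabilityMeasure (μ.map G) := Measure.isProbabilityMeasure_map hGmeas.aemeasurable
  have hmap : μ.map G = volume.restrict (Set.Ioc 0 1) := by
    refine Measure.ext_of_Iic (μ.map G) _ (fun u => ?_)
    rw [Measure.map_apply hGmeas measurableSet_Iic, Measure.restrict_apply measurableSet_Iic]
    rcases le_or_gt u 0 with h | h
    · have h1 : G ⁻¹' Set.Iic u = ∅ := by
        ext x
        simp only [Set.mem_preimage, Set.mem_Iic, Set.mem_empty_iff_false, iff_false, not_le]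
        exact lt_of_le_of_lt h (hGpos x)
      have h2 : Set.Iic u ∩ Set.Ioc 0 1 = ∅ := by
        ext t
        simp only [Set.mem_inter_iff, Set.mem_Iic, Set.mem_Ioc, Set.mem_empty_iff_false,
          iff_false]
        rintro ⟨ht, ht0, _⟩
        linarith
      simp [h1, h2]
    rcases lt_or_ge u 1 with h1 | h1
    · obtain ⟨bb, hbb⟩ : ∃ bb : ℕ, u < G (bb:ℝ) := (htop.eventually_const_lt h1).exists
      obtain ⟨a, ha⟩ : ∃ a : ℕ, G (-(a:ℝ)) < u := (hbot.eventually_lt_const h).exists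
      have hab : (-(a:ℝ)) ≤ (bb:ℝ) := by
        by_contra hcon
        push_neg at hcon
        exact absurd (hGsm hcon) (by linarith)
      obtain ⟨x₀, _, hx₀⟩ := intermediate_value_Icc hab hGcont.continuousOn ⟨ha.le, hbb.le⟩
      have hpre : G ⁻¹' Set.Iic u = Set.Iic x₀ := by
        ext x
        simp only [Set.mem_preimage, Set.mem_Iic, ← hx₀]
        exact hGsm.le_iff_le
      have h2 : Set.Iic u ∩ Set.Ioc 0 1 = Set.Ioc 0 u := by
        ext t
        simp only [Set.mem_inter_iff, Set.mem_Iic, Set.mem_Ioc]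
        constructor
        · rintro ⟨ht, ht0, _⟩; exact ⟨ht0, ht⟩
        · rintro ⟨ht0, ht⟩; exact ⟨ht, ht0, le_trans ht h1.le⟩
      rw [hpre, hμIic, hx₀, h2, Real.volume_Ioc]
      norm_num
    · have hpre : G ⁻¹' Set.Iic u = Set.univ :=
        Set.eq_univ_of_forall (fun x => le_trans (hGlt1 x).le h1)
      have h2 : Set.Iic u ∩ Set.Ioc 0 1 = Set.Ioc 0 1 :=
        Set.inter_eq_self_of_subset_right (fun t ht => le_trans ht.2 h1)
      rw [hpre, hμuniv, h2, Real.volume_Ioc]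
      norm_num
  refine ⟨hGsm.monotone, fun x => ⟨hGpos x, hGlt1 x⟩, ?_⟩
  intro k hk hknn hkint
  have hfm : Measurable fun x => g x * k (G x) := hmeas.mul (hk.comp hGmeas)
  have hkInt : IntegrableOn k (Set.Ioc 0 1) := by
    by_contra hcon
    rw [integral_undef hcon] at hkint
    norm_num at hkint
  have key : ∫⁻ x, ENNReal.ofReal (g x * k (G x)) = 1 := by
    have step1 : ∫⁻ x, ENNReal.ofReal (g x * k (G x))
        = ∫⁻ x, ENNReal.ofReal (k (G x)) ∂μ := by
      rw [hμ, lintegral_withDensity_eq_lintegral_mul volume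
        hmeas.ennreal_ofReal
        (show Measurable fun x => ENNReal.ofReal (k (G x)) from
          (hk.comp hGmeas).ennreal_ofReal)]
      congr 1
      ext x
      simp only [Pi.mul_apply, Function.comp_apply]
      rw [← ENNReal.ofReal_mul (hgnn x)]
    rw [step1, ← lintegral_map hk.ennreal_ofReal hGmeas, hmap,
      ← ofReal_integral_eq_lintegral_ofReal hkInt (ae_restrict_of_ae (ae_of_all _ hknn)),
      hkint, ENNReal.ofReal_one]
  have hInt : Integrable (fun x => g x * k (G x)) := by
    refine ⟨hfm.aestronglyMeasurable, ?_⟩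
    rw [hasFiniteIntegral_iff_ofReal (ae_of_all _ fun x => mul_nonneg (hgnn x) (hknn _)), key]
    exact ENNReal.one_lt_top
  refine ⟨hInt, ?_⟩
  rw [integral_eq_lintegral_of_nonneg_ae (ae_of_all _ fun x => mul_nonneg (hgnn x) (hknn _))
    hfm.aestronglyMeasurable, key, ENNReal.toReal_one]


lemma aux_L1 (gs : ℕ → ℝ → ℝ) (hi : ∀ m, Integrable (gs m)) (hnn : ∀ m x, 0 ≤ gs m x)
    (b : ℕ → ℝ) (hb : ∀ m, (∫ x, |gs (m+1) x - gs m x|) ≤ b m) (hbs : Summable b) :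
    (∀ ε > (0:ℝ), ∃ N, ∀ m₁ ≥ N, ∀ m₂ ≥ N, (∫ x, |gs m₁ x - gs m₂ x|) ≤ ε) ∧
    ∃ G : ℝ → ℝ,
      Tendsto (fun m => ∫ x, |gs m x - G x|) atTop (nhds 0) ∧
      Tendsto (fun m => tvDist (volume.withDensity fun x => ENNReal.ofReal (gs m x))
        (volume.withDensity fun x => ENNReal.ofReal (G x))) atTop (nhds 0) := by
  have hdist : ∀ (φ ψ : ℝ → ℝ) (hφ : Integrable φ volume) (hψ : Integrable ψ volume),
      dist (hφ.toL1 φ) (hψ.toL1 ψ) = ∫ x, |φ x - ψ x| := by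
    intro φ ψ hφ hψ
    have hm : AEStronglyMeasurable (fun x => |φ x - ψ x|) volume :=
      (hφ.sub hψ).abs.aestronglyMeasurable
    rw [dist_eq_norm, ← Integrable.toL1_sub, Integrable.norm_toL1_eq_lintegral_norm,
      integral_eq_lintegral_of_nonneg_ae (f := fun x => |φ x - ψ x|)
        (Filter.Eventually.of_forall fun x => abs_nonneg _) hm]
    simp [Real.norm_eq_abs]
  set T : ℕ → (ℝ →₁[volume] ℝ) := fun m => (hi m).toL1 _ with hT
  have hTd : ∀ m m', dist (T m) (T m') = ∫ x, |gs m x - gs m' x| := fun m m' =>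
    hdist _ _ (hi m) (hi m')
  have hcauchy : CauchySeq T := by
    apply cauchySeq_of_summable_dist
    apply Summable.of_nonneg_of_le (fun n => dist_nonneg) _ hbs
    intro n
    rw [hTd]
    calc (∫ x, |gs n x - gs (n+1) x|) = ∫ x, |gs (n+1) x - gs n x| := by
          simp_rw [abs_sub_comm]
      _ ≤ b n := hb n
  obtain ⟨L, hL⟩ := cauchySeq_tendsto_of_complete hcauchy
  constructor
  · intro ε hε
    obtain ⟨N, hN⟩ := Metric.cauchySeq_iff.mp hcauchy ε hε
    exact ⟨N, fun m₁ h₁ m₂ h₂ => by rw [← hTd]; exact (hN m₁ h₁ m₂ h₂).le⟩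
  · have hLint : Integrable (⇑L) volume := L1.integrable_coeFn L
    have hG0 : Tendsto (fun m => ∫ x, |gs m x - L x|) atTop (nhds 0) := by
      have heq : ∀ m, ∫ x, |gs m x - L x| = dist (T m) L := by
        intro m
        conv_rhs => rw [← Integrable.toL1_coeFn L hLint]
        exact (hdist _ _ (hi m) hLint).symm
      simp_rw [heq]
      exact tendsto_iff_dist_tendsto_zero.mp hL
    set G : ℝ → ℝ := fun x => max (L x) 0 with hGdef
    have hGint : Integrable G := hLint.pos_part
    have hGnn : ∀ x, 0 ≤ G x := fun x => le_max_right _ _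
    have hle : ∀ m x, |gs m x - G x| ≤ |gs m x - L x| := by
      intro m x
      rcases le_or_gt 0 (L x) with h | h
      · rw [hGdef]; simp only [max_eq_left h]; exact le_refl _
      · have h1 : G x = 0 := max_eq_right h.le
        rw [h1, sub_zero, abs_of_nonneg (hnn m x),
          abs_of_nonneg (by linarith [hnn m x] : (0:ℝ) ≤ gs m x - L x)]
        linarith
    have htendG : Tendsto (fun m => ∫ x, |gs m x - G x|) atTop (nhds 0) :=
      squeeze_zero (fun m => integral_nonneg fun x => abs_nonneg _)
        (fun m => integral_mono ((hi m).sub hGint).abs ((hi m).sub hLint).abs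
          (fun x => hle m x)) hG0
    refine ⟨G, htendG, ?_⟩
    have hset : ∀ (φ : ℝ → ℝ), Integrable φ volume → (∀ x, 0 ≤ φ x) →
        ∀ A : Set ℝ, MeasurableSet A →
        ((volume.withDensity fun x => ENNReal.ofReal (φ x)) A).toReal = ∫ x in A, φ x := by
      intro φ hφ hφnn A hA
      rw [withDensity_apply _ hA,
        ← ofReal_integral_eq_lintegral_ofReal hφ.integrableOn
          (ae_restrict_of_ae (Filter.Eventually.of_forall hφnn)),
        ENNReal.toReal_ofReal (setIntegral_nonneg hA fun x _ => hφnn x)]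
    haveI : Nonempty {s : Set ℝ // MeasurableSet s} := ⟨⟨∅, MeasurableSet.empty⟩⟩
    have hbnd : ∀ m (A : {s : Set ℝ // MeasurableSet s}),
        |((volume.withDensity fun x => ENNReal.ofReal (gs m x)) A.1).toReal -
          ((volume.withDensity fun x => ENNReal.ofReal (G x)) A.1).toReal|
          ≤ ∫ x, |gs m x - G x| := by
      intro m A
      rw [hset _ (hi m) (hnn m) A.1 A.2, hset _ hGint hGnn A.1 A.2,
        ← integral_sub ((hi m).integrableOn) (hGint.integrableOn)]
      calc |∫ x in A.1, (gs m x - G x)| ≤ ∫ x in A.1, |gs m x - G x| := by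
            simpa [Real.norm_eq_abs] using
              norm_integral_le_integral_norm (μ := volume.restrict A.1)
                (fun x => gs m x - G x)
        _ ≤ ∫ x, |gs m x - G x| :=
            setIntegral_le_integral ((hi m).sub hGint).abs
              (Filter.Eventually.of_forall fun x => abs_nonneg _)
    apply squeeze_zero (g := fun m => ∫ x, |gs m x - G x|)
    · intro m
      unfold tvDist
      have hBdd : BddAbove (Set.range fun A : {s : Set ℝ // MeasurableSet s} =>
          |((volume.withDensity fun x => ENNReal.ofReal (gs m x)) A.1).toReal -
            ((volume.withDensity fun x => ENNReal.ofReal (G x)) A.1).toReal|) := by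
        refine ⟨∫ x, |gs m x - G x|, ?_⟩
        rintro _ ⟨A, rfl⟩
        exact hbnd m A
      have := le_ciSup hBdd ⟨∅, MeasurableSet.empty⟩
      simpa using this.trans' (by simp)
    · intro m
      unfold tvDist
      exact ciSup_le (hbnd m)
    · exact htendG

/-- for the copula-based predictive densities f_{n+1}(x|y,z) =
(1-r_n) f_n(x|y) + r_n f_n(x|y) c_n(F_n(x|y), F_n(z|y)), one has E(D_n) ≤ 2 r_n;
if ∑ r_n < ∞ the random densities f_n(·|X(n)) form an a.s. Cauchy sequence in L¹ and
β_n converges a.s. in total variation to a random probability measure with a density. -/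
theorem stmt18 {Ω : Type*} [MeasureSpace Ω] [IsProbabilityMeasure (ℙ : Measure Ω)]
    (f0 : ℝ → ℝ)
    (hf0meas : Measurable f0) (hf0pos : ∀ x, 0 < f0 x)
    (hf0int : ∫ x, f0 x = 1)
    (c : ℕ → ℝ → ℝ → ℝ)
    (hcmeas : ∀ n, Measurable (Function.uncurry (c n)))
    (hcpos : ∀ n u v, 0 < c n u v)
    (hcmarg1 : ∀ n, ∀ v ∈ Set.Icc (0 : ℝ) 1, ∫ u in Set.Ioc (0 : ℝ) 1, c n u v = 1)
    (hcmarg2 : ∀ n, ∀ u ∈ Set.Icc (0 : ℝ) 1, ∫ v in Set.Ioc (0 : ℝ) 1, c n u v = 1)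
    (r : ℕ → ℝ) (hr : ∀ n, r n ∈ Set.Ioc (0 : ℝ) 1)
    (f : (n : ℕ) → (Fin n → ℝ) → ℝ → ℝ)
    (F : (n : ℕ) → (Fin n → ℝ) → ℝ → ℝ)
    (hfzero : ∀ (y : Fin 0 → ℝ) (x : ℝ), f 0 y x = f0 x)
    (hF : ∀ n (y : Fin n → ℝ) (x : ℝ), F n y x = ∫ t in Set.Iic x, f n y t)
    (hfrec : ∀ n (y : Fin n → ℝ) (z x : ℝ),
      f (n + 1) (Fin.snoc y z) x
        = (1 - r n) * f n y x + r n * f n y x * c n (F n y x) (F n y z))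
    (X : ℕ → Ω → ℝ)
    (hXmeas : ∀ n, Measurable (X n))
    (hpred : ∀ n (g : ℝ → ℝ), Measurable g → (∀ x, |g x| ≤ 1) →
      (ℙ[fun ω => g (X n ω) |
          MeasurableSpace.comap (fun ω (i : Fin n) => X i ω) MeasurableSpace.pi])
        =ᵐ[ℙ] fun ω => ∫ x, g x * f n (fun i : Fin n => X i ω) x)
    (hsum : Summable r) :
    (∀ n : ℕ,
      ∫ ω, (∫ x, |f (n + 1) (Fin.snoc (fun i : Fin n => X i ω) (X n ω)) x
        - f n (fun i : Fin n => X i ω) x|) ∂ℙ ≤ 2 * r n) ∧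
    (∀ᵐ ω ∂ℙ, ∀ ε > (0 : ℝ), ∃ N : ℕ, ∀ m₁ ≥ N, ∀ m₂ ≥ N,
      ∫ x, |f m₁ (fun i : Fin m₁ => X i ω) x - f m₂ (fun i : Fin m₂ => X i ω) x| ≤ ε) ∧
    (∃ g : Ω → ℝ → ℝ, ∀ᵐ ω ∂ℙ,
      (Tendsto (fun n => ∫ x, |f n (fun i : Fin n => X i ω) x - g ω x|)
        atTop (nhds 0)) ∧
      Tendsto (fun n =>
          tvDist
            (volume.withDensity fun x => ENNReal.ofReal (f n (fun i : Fin n => X i ω) x))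
            (volume.withDensity fun x => ENNReal.ofReal (g ω x)))
        atTop (nhds 0)) := by
  classical
  have hkmeas : ∀ (n : ℕ) (v : ℝ), Measurable (fun u => c n u v) := fun n v =>
    (hcmeas n).comp (measurable_id.prodMk measurable_const)
  -- deterministic induction: each predictive density is a genuine probability density
  have main : ∀ (n : ℕ) (y : Fin n → ℝ), Measurable (f n y) ∧ (∀ x, 0 < f n y x) ∧
      Integrable (f n y) ∧ ∫ x, f n y x = 1 := by
    intro n
    induction n with
    | zero =>
      intro y
      have h0 : f 0 y = f0 := funext (hfzero y)
      have hint : Integrable f0 := by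
        by_contra hcon
        rw [integral_undef hcon] at hf0int
        norm_num at hf0int
      rw [h0]
      exact ⟨hf0meas, hf0pos, hint, hf0int⟩
    | succ n ih =>
      intro y'
      set y : Fin n → ℝ := Fin.init y' with hy
      set z : ℝ := y' (Fin.last n) with hz
      have hy' : y' = Fin.snoc y z := (Fin.snoc_init_self y').symm
      obtain ⟨hm, hp, hi, h1⟩ := ih y
      obtain ⟨hGmono, hGIoo, hC⟩ := aux_cdf hm hp hi h1
      have hv : F n y z ∈ Set.Icc (0:ℝ) 1 := by
        rw [hF]; exact ⟨(hGIoo z).1.le, (hGIoo z).2.le⟩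
      obtain ⟨hki, hk1⟩ := hC (fun u => c n u (F n y z)) (hkmeas n _)
        (fun u => (hcpos n u _).le) (hcmarg1 n _ hv)
      have hfeq : f (n+1) y' = fun x => (1 - r n) * f n y x
          + r n * (f n y x * c n (∫ t in Set.Iic x, f n y t) (F n y z)) := by
        funext x
        rw [hy', hfrec n y z x, hF n y x]
        ring
      have hGm : Measurable fun x => ∫ t in Set.Iic x, f n y t := hGmono.measurable
      refine ⟨?_, ?_, ?_, ?_⟩
      · rw [hfeq]
        exact (measurable_const.mul hm).add (measurable_const.mul
          (hm.mul ((hkmeas n (F n y z)).comp hGm)))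
      · intro x
        rw [hfeq]
        have h2 := (hr n).1
        have h3 := (hr n).2
        have h4 := hp x
        have hc := hcpos n (∫ t in Set.Iic x, f n y t) (F n y z)
        have t1 : 0 ≤ (1 - r n) * f n y x := mul_nonneg (by linarith) h4.le
        have t2 : 0 < r n * (f n y x * c n (∫ t in Set.Iic x, f n y t) (F n y z)) :=
          mul_pos h2 (mul_pos h4 hc)
        simp only
        linarith
      · rw [hfeq]
        exact (hi.const_mul _).add (hki.const_mul _)
      · rw [hfeq, integral_add (hi.const_mul _) (hki.const_mul _), integral_const_mul,
          integral_const_mul, h1, hk1]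
        ring
  -- deterministic L¹ bound
  have hDbound : ∀ (n : ℕ) (y : Fin n → ℝ) (z : ℝ),
      (∫ x, |f (n+1) (Fin.snoc y z) x - f n y x|) ≤ 2 * r n := by
    intro n y z
    obtain ⟨hm, hp, hi, h1⟩ := main n y
    obtain ⟨hGmono, hGIoo, hC⟩ := aux_cdf hm hp hi h1
    have hv : F n y z ∈ Set.Icc (0:ℝ) 1 := by
      rw [hF]; exact ⟨(hGIoo z).1.le, (hGIoo z).2.le⟩
    obtain ⟨hki, hk1⟩ := hC (fun u => c n u (F n y z)) (hkmeas n _)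
      (fun u => (hcpos n u _).le) (hcmarg1 n _ hv)
    set h : ℝ → ℝ := fun x => f n y x * c n (∫ t in Set.Iic x, f n y t) (F n y z) with hh
    have hki' : Integrable h := hki
    have hk1' : ∫ x, h x = 1 := hk1
    have hhnn : ∀ x, 0 ≤ h x := fun x =>
      mul_nonneg (hp x).le (hcpos n _ _).le
    have habs : ∀ x, |f (n+1) (Fin.snoc y z) x - f n y x| = r n * |h x - f n y x| := by
      intro x
      have hdiff : f (n+1) (Fin.snoc y z) x - f n y x = r n * (h x - f n y x) := by
        rw [hfrec n y z x, hh]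
        simp only
        rw [hF n y x]
        ring
      rw [hdiff, abs_mul, abs_of_pos (hr n).1]
    calc (∫ x, |f (n+1) (Fin.snoc y z) x - f n y x|)
        = ∫ x, r n * |h x - f n y x| := by simp_rw [habs]
      _ ≤ ∫ x, r n * (h x + f n y x) := by
          apply integral_mono (((hki'.sub hi).abs).const_mul _) ((hki'.add hi).const_mul _)
          intro x
          apply mul_le_mul_of_nonneg_left _ (hr n).1.le
          have h1' : |h x - f n y x| ≤ |h x| + |f n y x| := abs_sub _ _
          rwa [abs_of_nonneg (hhnn x), abs_of_nonneg (hp x).le] at h1'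
      _ = 2 * r n := by
          rw [integral_const_mul, integral_add hki' hi, hk1', h1]
          ring
  have hsnoc : ∀ (m : ℕ) (ω : Ω),
      (fun i : Fin (m+1) => X i ω) = Fin.snoc (fun i : Fin m => X i ω) (X m ω) := by
    intro m ω
    funext i
    refine Fin.lastCases ?_ ?_ i
    · simp
    · intro j
      simp
  have hωpack : ∀ ω : Ω,
      (∀ ε > (0:ℝ), ∃ N, ∀ m₁ ≥ N, ∀ m₂ ≥ N,
        (∫ x, |f m₁ (fun i : Fin m₁ => X i ω) x - f m₂ (fun i : Fin m₂ => X i ω) x|) ≤ ε) ∧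
      ∃ G : ℝ → ℝ,
        Tendsto (fun m => ∫ x, |f m (fun i : Fin m => X i ω) x - G x|) atTop (nhds 0) ∧
        Tendsto (fun m => tvDist
            (volume.withDensity fun x => ENNReal.ofReal (f m (fun i : Fin m => X i ω) x))
            (volume.withDensity fun x => ENNReal.ofReal (G x))) atTop (nhds 0) := by
    intro ω
    refine aux_L1 (fun m => f m (fun i : Fin m => X i ω))
      (fun m => (main m _).2.2.1) (fun m x => ((main m _).2.1 x).le)
      (fun m => 2 * r m) ?_ (hsum.mul_left 2)
    intro m
    show (∫ x, |f (m+1) (fun i : Fin (m+1) => X i ω) x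
      - f m (fun i : Fin m => X i ω) x|) ≤ 2 * r m
    rw [hsnoc m ω]
    exact hDbound m _ _
  refine ⟨?_, ae_of_all _ fun ω => (hωpack ω).1, ?_⟩
  · intro n
    have hb : ∀ ω : Ω, (∫ x, |f (n+1) (Fin.snoc (fun i : Fin n => X i ω) (X n ω)) x
        - f n (fun i : Fin n => X i ω) x|) ≤ 2 * r n := fun ω => hDbound n _ _
    refine le_trans (integral_mono_of_nonneg
      (ae_of_all _ fun ω => integral_nonneg fun x => abs_nonneg _)
      (integrable_const (2 * r n)) (ae_of_all _ hb)) ?_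
    simp
  · choose g hg using fun ω => (hωpack ω).2
    exact ⟨g, ae_of_all _ hg⟩
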